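/- Let f(x) = sin(x)(1 - 1/(8 sin(x/2)^3)) on (0, 2π) and let θ_c be its unique critical point in (0, π). Suppose 0 < t₁ᴸ < t₂ᴸ < θ_c < t₂ᴿ < t₁ᴿ < 2π with f(t₁ᴸ) = f(t₁ᴿ) and f(t₂ᴸ) = f(t₂ᴿ). Then t₂ᴸ + t₂ᴿ < t₁ᴸ + t₁ᴿ. -/

import Mathlib

/-!
Since `f''' > 0`, the derivative `f'` is strictly convex, so the trapezoid rule overestimates its
integral: `f b - f a < (b - a) (f' a + f' b) / 2` for `a < b`. Hence `f' a + f' b > 0` whenever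
`f a ≤ f b`. If the claim failed, put `c = t₂ᴸ + t₂ᴿ ≥ t₁ᴸ + t₁ᴿ` and `g x = f x - f (c - x)` on
`[c - t₁ᴿ, t₂ᴸ]`. As `f` increases on `[t₁ᴸ, t₂ᴸ]`, `g ≥ 0` at the left end and `g = 0` at the right
end, while wherever `g x ≤ 0` its derivative `f' x + f' (c - x)` is positive; a function with
these properties cannot come back down to `0`.
-/

open Real Set

noncomputable def f (x : ℝ) : ℝ := Real.sin x * (1 - 1 / (8 * (Real.sin (x/2))^3))

lemma IsMinOn.hasDerivAt_nonpos_of_Icc_right {g : ℝ → ℝ} {g' p q : ℝ} (hpq : p < q)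
    (hmin : IsMinOn g (Icc p q) q) (hg : HasDerivAt g g' q) : g' ≤ 0 := by
  have hcone : p - q ∈ posTangentConeAt (Icc p q) q :=
    sub_mem_posTangentConeAt_of_segment_subset (by rw [segment_symm, segment_eq_Icc hpq.le])
  have := hmin.localize.hasFDerivWithinAt_nonneg hg.hasFDerivAt.hasFDerivWithinAt hcone
  rw [ContinuousLinearMap.toSpanSingleton_apply, smul_eq_mul] at this
  exact nonpos_of_mul_nonneg_right this (sub_neg.mpr hpq)

lemma pos_of_deriv_pos_where_nonpos {g g' : ℝ → ℝ} {p q : ℝ} (hpq : p < q)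
    (hg : ∀ x ∈ Icc p q, HasDerivAt g (g' x) x) (hgp : 0 ≤ g p)
    (hg' : ∀ x ∈ Ioc p q, g x ≤ 0 → 0 < g' x) : 0 < g q := by
  by_contra! hgq
  obtain ⟨ξ, hξ, hmin⟩ := isCompact_Icc.exists_isMinOn (nonempty_Icc.mpr hpq.le)
    fun x hx => (hg x hx).continuousAt.continuousWithinAt
  -- a minimum at `p` forces `g p = g q`, so `q` is a minimum as well
  obtain ⟨ξ, hξ, hmin⟩ : ∃ ξ ∈ Ioc p q, IsMinOn g (Icc p q) ξ := by
    rcases hξ.1.eq_or_lt with rfl | hpξ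
    · exact ⟨q, right_mem_Ioc.mpr hpq, fun x hx => (hgq.trans hgp).trans (hmin hx)⟩
    · exact ⟨ξ, ⟨hpξ, hξ.2⟩, hmin⟩
  have hgξ : g ξ ≤ 0 := (hmin (right_mem_Icc.mpr hpq.le)).trans hgq
  have := (hmin.on_subset (Icc_subset_Icc_right hξ.2)).hasDerivAt_nonpos_of_Icc_right hξ.1
    (hg ξ (Ioc_subset_Icc_self hξ))
  exact (hg' ξ hξ hgξ).not_ge this

section PositiveThirdDerivative

variable {F F' F'' : ℝ → ℝ} {s : Set ℝ} (hs : Convex ℝ s)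
  (hF : ∀ x ∈ s, HasDerivAt F (F' x) x) (hF' : ∀ x ∈ s, HasDerivAt F' (F'' x) x)
  (hF'' : StrictMonoOn F'' s)
include hs hF hF' hF''

lemma sub_lt_trapezoid {a b : ℝ} (ha : a ∈ s) (hb : b ∈ s) (hab : a < b) :
    F b - F a < (b - a) * (F' a + F' b) / 2 := by
  have hsub : Icc a b ⊆ s := hs.ordConnected.out ha hb
  have hconv : StrictConvexOn ℝ s F' :=
    StrictMonoOn.strictConvexOn_of_deriv hs (fun x hx => (hF' x hx).continuousAt.continuousWithinAt)
      ((hF''.mono interior_subset).congr fun x hx => (hF' x (interior_subset hx)).deriv.symm)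
  let ψ : ℝ → ℝ := fun x => F x - F a - (x - a) * (F' a + F' x) / 2
  have hψ : ∀ x ∈ Icc a b,
      HasDerivAt ψ ((F' x - F' a) / 2 - (x - a) * F'' x / 2) x := by
    intro x hx
    refine (((hF x (hsub hx)).sub_const (F a)).sub
      ((((hasDerivAt_id' x).sub_const a).mul ((hF' x (hsub hx)).const_add (F' a))).div_const 2)
      ).congr_deriv ?_
    ring
  have hanti : StrictAntiOn ψ (Icc a b) := by
    refine strictAntiOn_of_deriv_neg (convex_Icc a b)
      (fun x hx => (hψ x hx).continuousAt.continuousWithinAt) fun x hx => ?_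
    rw [interior_Icc] at hx
    rw [(hψ x (Ioo_subset_Icc_self hx)).deriv]
    have hx' := hsub (Ioo_subset_Icc_self hx)
    have := hconv.slope_lt_of_hasDerivAt ha hx' hx.1 (hF' x hx')
    rw [slope_def_field, div_lt_iff₀ (sub_pos.mpr hx.1)] at this
    linarith
  have := hanti (left_mem_Icc.mpr hab.le) (right_mem_Icc.mpr hab.le) hab
  simp only [ψ, sub_self, zero_mul, zero_div] at this
  linarith

lemma add_deriv_pos_of_le {a b : ℝ} (ha : a ∈ s) (hb : b ∈ s) (hab : a < b) (hFab : F a ≤ F b) :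
    0 < F' a + F' b := by
  have := sub_lt_trapezoid hs hF hF' hF'' ha hb hab
  nlinarith

theorem add_lt_add_of_apply_eq {a₁ a₂ b₁ b₂ : ℝ} (ha₁ : a₁ ∈ s) (hb₁ : b₁ ∈ s)
    (ha : a₁ < a₂) (hab : a₂ < b₂) (hb : b₂ < b₁) (hmono : MonotoneOn F (Icc a₁ a₂))
    (h₁ : F a₁ = F b₁) (h₂ : F a₂ = F b₂) : a₂ + b₂ < a₁ + b₁ := by
  by_contra! hc
  set c := a₂ + b₂
  have hsub : Icc a₁ b₁ ⊆ s := hs.ordConnected.out ha₁ hb₁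
  have hmem : ∀ x ∈ Icc (c - b₁) a₂, x ∈ s ∧ c - x ∈ s := fun x hx =>
    ⟨hsub ⟨by linarith [hx.1], by linarith [hx.2]⟩, hsub ⟨by linarith [hx.2], by linarith [hx.1]⟩⟩
  let g : ℝ → ℝ := fun x => F x - F (c - x)
  have hg : ∀ x ∈ Icc (c - b₁) a₂, HasDerivAt g (F' x + F' (c - x)) x := by
    intro x hx
    refine ((hF x (hmem x hx).1).sub ((hF (c - x) (hmem x hx).2).comp x
      ((hasDerivAt_id' x).const_sub c))).congr_deriv ?_
    ring
  have hg_left : 0 ≤ g (c - b₁) := by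
    have : F a₁ ≤ F (c - b₁) :=
      hmono (left_mem_Icc.mpr ha.le) ⟨by linarith, by linarith⟩ (by linarith)
    simp only [g, sub_sub_cancel, ← h₁]
    linarith
  have hg_pos : 0 < g a₂ := by
    refine pos_of_deriv_pos_where_nonpos (by linarith) hg hg_left fun x hx hgx => ?_
    exact add_deriv_pos_of_le hs hF hF' hF'' (hmem x (Ioc_subset_Icc_self hx)).1
      (hmem x (Ioc_subset_Icc_self hx)).2 (by linarith [hx.2]) (by simpa [g] using hgx)
  simp [g, c, h₂] at hg_pos

end PositiveThirdDerivative

noncomputable def f' (x : ℝ) : ℝ :=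
  cos x + (1 + cos (x/2)^2) / (8 * sin (x/2)^3)

noncomputable def f'' (x : ℝ) : ℝ :=
  -sin x - cos (x/2) * (5 + cos (x/2)^2) / (16 * sin (x/2)^4)

noncomputable def f''' (x : ℝ) : ℝ :=
  -cos x + (sin (x/2)^2 * (5 + 3 * cos (x/2)^2) + 4 * cos (x/2)^2 * (5 + cos (x/2)^2))
    / (32 * sin (x/2)^5)

lemma sin_half_pos {x : ℝ} (hx : x ∈ Ioo 0 (2 * π)) : 0 < sin (x/2) :=
  sin_pos_of_pos_of_lt_pi (by linarith [hx.1]) (by linarith [hx.2])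

lemma sin_eq_two_mul_sin_half_mul_cos_half (x : ℝ) : sin x = 2 * sin (x/2) * cos (x/2) := by
  rw [← sin_two_mul, mul_div_cancel₀ x two_ne_zero]

lemma cos_eq_one_sub_two_mul_sin_half_sq (x : ℝ) : cos x = 1 - 2 * sin (x/2)^2 := by
  rw [← cos_two_mul_eq_one_sub, mul_div_cancel₀ x two_ne_zero]

lemma hasDerivAt_sin_half (x : ℝ) : HasDerivAt (fun y => sin (y/2)) (cos (x/2) / 2) x := by
  simpa [mul_comm, div_eq_mul_inv] using ((hasDerivAt_id x).div_const 2).sin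

lemma hasDerivAt_cos_half (x : ℝ) : HasDerivAt (fun y => cos (y/2)) (-sin (x/2) / 2) x := by
  simpa [mul_comm, div_eq_mul_inv] using ((hasDerivAt_id x).div_const 2).cos

lemma hasDerivAt_f {x : ℝ} (hx : x ∈ Ioo 0 (2 * π)) : HasDerivAt f (f' x) x := by
  have hs := (sin_half_pos hx).ne'
  refine ((hasDerivAt_sin x).fun_mul ((hasDerivAt_const x 1).fun_sub ((hasDerivAt_const x 1).fun_div
    (((hasDerivAt_sin_half x).fun_pow 3).const_mul 8) (by positivity)))).congr_deriv ?_
  rw [f', sin_eq_two_mul_sin_half_mul_cos_half x, cos_eq_one_sub_two_mul_sin_half_sq x]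
  field_simp
  linear_combination 2 * sin (x/2)^2 * sin_sq_add_cos_sq (x/2)

lemma hasDerivAt_f' {x : ℝ} (hx : x ∈ Ioo 0 (2 * π)) : HasDerivAt f' (f'' x) x := by
  have hs := (sin_half_pos hx).ne'
  refine ((hasDerivAt_cos x).add ((((hasDerivAt_cos_half x).fun_pow 2).const_add 1).fun_div
    (((hasDerivAt_sin_half x).fun_pow 3).const_mul 8) (by positivity))).congr_deriv ?_
  rw [f'']
  field_simp
  linear_combination -32 * cos (x/2) * sin (x/2)^2 * sin_sq_add_cos_sq (x/2)

lemma hasDerivAt_f'' {x : ℝ} (hx : x ∈ Ioo 0 (2 * π)) : HasDerivAt f'' (f''' x) x := by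
  have hs := (sin_half_pos hx).ne'
  refine ((hasDerivAt_sin x).neg.sub (((hasDerivAt_cos_half x).fun_mul
    (((hasDerivAt_cos_half x).fun_pow 2).const_add 5)).fun_div
    (((hasDerivAt_sin_half x).fun_pow 4).const_mul 16) (by positivity))).congr_deriv ?_
  rw [f''']
  field_simp
  ring

lemma f'''_pos {x : ℝ} (hx : x ∈ Ioo 0 (2 * π)) : 0 < f''' x := by
  have hs := sin_half_pos hx
  have hs1 : sin (x/2) ≤ 1 := sin_le_one _
  have hc : cos (x/2)^2 = 1 - sin (x/2)^2 := cos_sq' _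
  rw [f''', cos_eq_one_sub_two_mul_sin_half_sq, hc]
  set s := sin (x/2)
  have hnum : 0 < 64 * s^7 - 32 * s^5 + s^4 - 20 * s^2 + 24 := by
    rcases le_or_gt (s^2) (1/2) with h | h
    · nlinarith [pow_pos hs 4, pow_pos hs 5, mul_le_of_le_one_left (pow_pos hs 4).le hs1]
    · nlinarith [pow_pos hs 5, pow_pos hs 7]
  calc 0 < (64 * s^7 - 32 * s^5 + s^4 - 20 * s^2 + 24) / (32 * s^5) := div_pos hnum (by positivity)
    _ = _ := by field_simp; ring

lemma f''_strictMonoOn : StrictMonoOn f'' (Ioo 0 (2 * π)) :=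
  strictMonoOn_of_hasDerivWithinAt_pos (convex_Ioo _ _)
    (fun _ hx => (hasDerivAt_f'' hx).continuousAt.continuousWithinAt)
    (fun _ hx => (hasDerivAt_f'' (interior_subset hx)).hasDerivWithinAt)
    (fun _ hx => f'''_pos (interior_subset hx))

lemma f'_pos_of_lt_one {x : ℝ} (h0 : 0 < x) (h1 : x < 1) : 0 < f' x := by
  have hπ := pi_gt_three
  have hs : 0 < sin (x/2) := sin_pos_of_pos_of_lt_pi (by linarith) (by linarith)
  have hcube : 8 * sin (x/2)^3 < 1 := by
    have : sin (x/2)^3 < (x/2)^3 := pow_lt_pow_left₀ (sin_lt (by linarith)) hs.le (by norm_num)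
    nlinarith [pow_lt_one₀ h0.le h1 (three_ne_zero)]
  have : 1 < (1 + cos (x/2)^2) / (8 * sin (x/2)^3) := by
    rw [lt_div_iff₀ (by positivity)]
    nlinarith [sq_nonneg (cos (x/2))]
  rw [f']
  linarith [neg_one_le_cos x]

lemma f'_pos_of_lt_critical {θc : ℝ} (hθc : θc ≤ π)
    (huniq : ∀ θ ∈ Ioo 0 π, deriv f θ = 0 → θ = θc) {y : ℝ} (hy : y ∈ Ioo 0 θc) : 0 < f' y := by
  have hπ := pi_gt_three
  by_contra! hy'
  set x := min y 1 / 2 with hx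
  have hx0 : 0 < x := by positivity [hy.1]
  have hxy : x < y := by linarith [min_le_left y 1, hy.1, hx]
  have hsub : Icc x y ⊆ Ioo 0 (2 * π) := fun z hz => ⟨hx0.trans_le hz.1, by linarith [hz.2, hy.2]⟩
  obtain ⟨z, hz, hfz⟩ := intermediate_value_Icc' hxy.le
    (fun z hz => (hasDerivAt_f' (hsub hz)).continuousAt.continuousWithinAt)
    ⟨hy', (f'_pos_of_lt_one hx0 (by linarith [min_le_right y 1, hx])).le⟩
  have := huniq z ⟨hx0.trans_le hz.1, by linarith [hz.2, hy.2]⟩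
    (by rw [(hasDerivAt_f (hsub hz)).deriv, hfz])
  linarith [hz.2, hy.2]

lemma f_strictMonoOn {θc : ℝ} (hθc : θc ≤ π) (huniq : ∀ θ ∈ Ioo 0 π, deriv f θ = 0 → θ = θc) :
    StrictMonoOn f (Ioo 0 θc) := by
  have hsub : Ioo 0 θc ⊆ Ioo 0 (2 * π) := Ioo_subset_Ioo_right (by linarith [pi_pos])
  exact strictMonoOn_of_hasDerivWithinAt_pos (convex_Ioo _ _)
    (fun _ hx => (hasDerivAt_f (hsub hx)).continuousAt.continuousWithinAt)
    (fun _ hx => (hasDerivAt_f (hsub (interior_subset hx))).hasDerivWithinAt)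
    (fun _ hx => f'_pos_of_lt_critical hθc huniq (interior_subset hx))

theorem stmt6_general (θc : ℝ) (hθc : θc ∈ Ioo (0:ℝ) π)
    (huniq : ∀ θ ∈ Ioo (0:ℝ) π, deriv f θ = 0 → θ = θc)
    (t1L t1R t2L t2R : ℝ)
    (h1 : 0 < t1L) (h2 : t1L < t2L) (h3 : t2L < θc) (h4 : θc < t2R)
    (h5 : t2R < t1R) (h6 : t1R < 2*π)
    (hf1 : f t1L = f t1R) (hf2 : f t2L = f t2R) :
    t2L + t2R < t1L + t1R := by
  have hmono : MonotoneOn f (Icc t1L t2L) :=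
    (f_strictMonoOn hθc.2.le huniq).monotoneOn.mono (Icc_subset_Ioo h1 h3)
  exact add_lt_add_of_apply_eq (convex_Ioo 0 (2 * π)) (fun _ hx => hasDerivAt_f hx)
    (fun _ hx => hasDerivAt_f' hx) f''_strictMonoOn ⟨h1, by linarith⟩ ⟨by linarith, h6⟩
    h2 (h3.trans h4) h5 hmono hf1 hf2

theorem stmt6 (θc : ℝ) (hθc : θc ∈ Ioo (0:ℝ) π) (hcrit : deriv f θc = 0)
    (huniq : ∀ θ ∈ Ioo (0:ℝ) π, deriv f θ = 0 → θ = θc)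
    (t1L t1R t2L t2R : ℝ)
    (h1 : 0 < t1L) (h2 : t1L < t2L) (h3 : t2L < θc) (h4 : θc < t2R)
    (h5 : t2R < t1R) (h6 : t1R < 2*π)
    (hf1 : f t1L = f t1R) (hf2 : f t2L = f t2R) :
    t2L + t2R < t1L + t1R :=
  stmt6_general θc hθc huniq t1L t1R t2L t2R h1 h2 h3 h4 h5 h6 hf1 hf2
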